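/- Let X̄ be a formal O-module over k̆ of finite height h > 0 and let C ∈ CNL. Between any two deformations X_C and X'_C of X̄ to C there exists at most one isomorphism of formal O-modules over C that reduces to the identity modulo the maximal ideal m_C. -/

import Mathlib

/-!
STATEMENT 4.  Let X̄ be a formal O-module over k̆ of finite height h > 0 and let
C ∈ CNL.  Between any two deformations X_C and X'_C of X̄ to C there exists at
most one isomorphism of formal O-modules over C that reduces to the identity
modulo the maximal ideal m_C.

Conventions as in STATEMENT 3: O is a complete discrete valuation ring with
finite residue field and uniformizer ϖ; Ŏ a complete DVR, unramified over O,
with algebraically closed residue field k̆ algebraic over k; CNL is the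
category of complete noetherian local Ŏ-algebras with residue field k̆.
-/


set_option maxHeartbeats 8000000

noncomputable section

namespace FormalMod

variable {B S : Type} [CommRing B] [CommRing S]

/-- `evalAt c u = ∑_n (c n) · u^n`, the evaluation of the series with coefficients
`c : ℕ → B⟦X⟧` at `u ∈ B⟦X⟧`; this is the correct value whenever the constant
term of `u` vanishes (the only case in which we use it). -/
def evalAt (c : ℕ → PowerSeries B) (u : PowerSeries B) : PowerSeries B :=
  PowerSeries.mk fun m =>
    ∑ n ∈ Finset.range (m + 1), PowerSeries.coeff (R := B) m (c n * u ^ n)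

/-- Composition `g ∘ f = g(f(X))` of univariate formal power series (for `f` with
vanishing constant term). -/
def comp (g f : PowerSeries B) : PowerSeries B :=
  evalAt (fun n => PowerSeries.C (R := B) (PowerSeries.coeff (R := B) n g)) f

/-- Bivariate formal power series `B[[X,Y]] = (B[[Y]])[[X]]`. -/
abbrev Biv (B : Type) [CommRing B] := PowerSeries (PowerSeries B)

/-- The (m,n)-th coefficient (of `X^m Y^n`) of a bivariate power series. -/
def coeff2 (m n : ℕ) (F : Biv B) : B :=
  PowerSeries.coeff (R := B) n (PowerSeries.coeff (R := (PowerSeries B)) m F)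

/-- `subst2 ψ F u v = F(u, v)`: substitution of both arguments of a bivariate
series `F ∈ B[[X,Y]]`, `F = ∑_n a_n(Y) Xⁿ ↦ ∑_n a_n(v) uⁿ`, with coefficients
transported along `ψ : B →+* S` (meaningful when `u`, `v` have vanishing
constant terms). -/
def subst2 (ψ : B →+* S) (F : Biv B) (u v : PowerSeries S) : PowerSeries S :=
  evalAt (fun n => comp (PowerSeries.map ψ (PowerSeries.coeff (R := (PowerSeries B)) n F)) v) u

/-- Associativity `Φ(Φ(X,Y),Z) = Φ(X,Φ(Y,Z))` of a bivariate power series,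
written out in `B[[X,Y,Z]] = ((B[[Z]])[[Y]])[[X]]`. -/
def IsAssoc (F : Biv B) : Prop :=
  subst2 ((PowerSeries.C (R := (PowerSeries B))).comp (PowerSeries.C (R := B))) F
      (PowerSeries.map (PowerSeries.map (PowerSeries.C (R := B))) F)
      (PowerSeries.C (R := (PowerSeries (PowerSeries B)))
        (PowerSeries.C (R := (PowerSeries B)) PowerSeries.X))
    = subst2 ((PowerSeries.C (R := (PowerSeries B))).comp (PowerSeries.C (R := B))) F
      PowerSeries.X
      (PowerSeries.C (R := (PowerSeries (PowerSeries B))) F)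

/-- A (one-dimensional, commutative) formal group law over `B`:
`Φ(X,Y) = Φ(Y,X)`, `Φ(X,0) = X`, `Φ(Φ(X,Y),Z) = Φ(X,Φ(Y,Z))`. -/
structure FormalGroup (B : Type) [CommRing B] where
  F : Biv B
  comm : ∀ m n, coeff2 m n F = coeff2 n m F
  unit : PowerSeries.map (PowerSeries.constantCoeff (R := B)) F = PowerSeries.X
  assoc : IsAssoc F

/-- `β(F(X,Y)) = G(β(X), β(Y))`: `β` is a homomorphism of formal group laws. -/
def IsLawHom (F G : Biv B) (β : PowerSeries B) : Prop :=
  comp (PowerSeries.map (PowerSeries.C (R := B)) β) F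
    = subst2 (PowerSeries.C (R := B)) G (PowerSeries.map (PowerSeries.C (R := B)) β)
        (PowerSeries.C (R := (PowerSeries B)) β)

/-- A formal `O`-module over the `O`-algebra `(B, α)`: a formal group law `Φ`
together with a ring homomorphism `[·] : O → End(Φ)` with `D ∘ [·] = α`. -/
structure FormalOModule (O B : Type) [CommRing O] [CommRing B] (α : O →+* B)
    extends FormalGroup B where
  act : O → PowerSeries B
  act_constantCoeff : ∀ c, PowerSeries.constantCoeff (R := B) (act c) = 0
  act_deriv : ∀ c, PowerSeries.coeff (R := B) 1 (act c) = α c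
  act_hom : ∀ c, IsLawHom F F (act c)
  act_add : ∀ c d, act (c + d) = subst2 (RingHom.id B) F (act c) (act d)
  act_mul : ∀ c d, act (c * d) = comp (act c) (act d)
  act_one : act 1 = PowerSeries.X

/-- `β` is a homomorphism of formal `O`-modules `M → N` (over the same base). -/
def IsModuleHom {O B : Type} [CommRing O] [CommRing B] {α : O →+* B}
    (M N : FormalOModule O B α) (β : PowerSeries B) : Prop :=
  PowerSeries.constantCoeff (R := B) β = 0 ∧
  IsLawHom M.F N.F β ∧
  ∀ c, comp β (M.act c) = comp (N.act c) β

/-- `N` is the base change (pushforward) of `M` along `f : B →+* B'`. -/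
def IsBaseChange {O B B' : Type} [CommRing O] [CommRing B] [CommRing B']
    {α : O →+* B} {α' : O →+* B'} (f : B →+* B')
    (M : FormalOModule O B α) (N : FormalOModule O B' α') : Prop :=
  N.F = PowerSeries.map (PowerSeries.map f) M.F ∧
  ∀ c, N.act c = PowerSeries.map f (M.act c)

/-- The formal `O`-module `M` (over a base where `α ϖ = 0`) has height `h`:
`[ϖ]_M = γ(X^{q^h})` with `D γ ≠ 0`.  Here `q` is the residue cardinality of `O`. -/
def HasHeight {O B : Type} [CommRing O] [CommRing B] {α : O →+* B}
    (M : FormalOModule O B α) (ϖ : O) (q h : ℕ) : Prop :=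
  ∃ γ : PowerSeries B, PowerSeries.constantCoeff (R := B) γ = 0 ∧
    PowerSeries.coeff (R := B) 1 γ ≠ 0 ∧
    M.act ϖ = comp γ (PowerSeries.X ^ q ^ h)

end FormalMod

/-!
Put `ε = β' - β`, `u = [ϖ]_{X_C}` and `v = [ϖ]_{X'_C}`. Since `β` and `β'` intertwine the
actions of `ϖ`, `ε(u) = v(β') - v(β)`. Modulo `m_C` both `u` and `v` reduce to `γ(X^Q)` with
`Q = q^h`: so `u` has its first unit coefficient at `X^Q`, and `v` has vanishing formal
derivative, as `Q = 0` in `k̆`. If the coefficients of `ε` lie in `m_C^n`, a first-order Taylor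
expansion puts those of `v(β') - v(β)` in `m_C^(n+1)`, and reading off the coefficient of
`X^(Qk)` in `ε(u)` puts `ε_k` in `m_C^(n+1)`, by induction on `k`. Since `C` is `m_C`-adically
separated, `ε = 0`.
-/

theorem natCast_card_eq_zero_of_ringHom {K L : Type*} [Field K] [Finite K] [Semiring L]
    (φ : K →+* L) : (Nat.card K : L) = 0 := by
  have : Fintype K := Fintype.ofFinite K
  rw [Nat.card_eq_fintype_card, ← map_natCast φ, FiniteField.cast_card_eq_zero, map_zero]

namespace FormalMod

open PowerSeries

variable {R S : Type} [CommRing R] [CommRing S]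

theorem coeff_comp (g f : PowerSeries R) (m : ℕ) :
    coeff m (comp g f) = ∑ n ∈ Finset.range (m + 1), coeff n g * coeff m (f ^ n) := by
  simp only [comp, evalAt, coeff_mk, coeff_C_mul]

theorem sub_comp (g₁ g₂ f : PowerSeries R) : comp (g₁ - g₂) f = comp g₁ f - comp g₂ f := by
  ext m
  simp only [coeff_comp, map_sub, sub_mul, Finset.sum_sub_distrib]

theorem map_comp (ψ : R →+* S) (g f : PowerSeries R) :
    map ψ (comp g f) = comp (map ψ g) (map ψ f) := by
  ext m
  simp only [coeff_map, coeff_comp, map_sum, map_mul, ← map_pow]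

theorem coeff_comp_X_pow (γ : PowerSeries R) (Q m : ℕ) :
    coeff m (comp γ (X ^ Q)) =
      ∑ n ∈ Finset.range (m + 1), if m = Q * n then coeff n γ else 0 := by
  refine (coeff_comp γ _ m).trans (Finset.sum_congr rfl fun n _ => ?_)
  rw [← pow_mul, coeff_X_pow, mul_ite, mul_one, mul_zero]

theorem X_pow_dvd_comp_X_pow {γ : PowerSeries R} (hγ : constantCoeff γ = 0) (Q : ℕ) :
    X ^ Q ∣ comp γ (X ^ Q) := by
  refine X_pow_dvd_iff.2 fun m hm => ?_
  rw [coeff_comp_X_pow]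
  refine Finset.sum_eq_zero fun n _ => ite_eq_right_iff.2 fun hmn => ?_
  obtain rfl : n = 0 := by
    by_contra hn
    exact hm.not_ge (hmn ▸ Nat.le_mul_of_pos_right Q (Nat.pos_of_ne_zero hn))
  rwa [coeff_zero_eq_constantCoeff_apply]

theorem coeff_comp_X_pow_self (γ : PowerSeries R) {Q : ℕ} (hQ : 0 < Q) :
    coeff Q (comp γ (X ^ Q)) = coeff 1 γ := by
  rw [coeff_comp_X_pow, Finset.sum_eq_single_of_mem 1 (Finset.mem_range.2 (by omega)),
    if_pos (mul_one Q).symm]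
  intro n _ hn
  exact if_neg fun h => hn (Nat.eq_of_mul_eq_mul_left hQ (h.symm.trans (mul_one Q).symm))

theorem natCast_mul_coeff_comp_X_pow (γ : PowerSeries R) {Q : ℕ} (hQ : (Q : R) = 0) (m : ℕ) :
    (m : R) * coeff m (comp γ (X ^ Q)) = 0 := by
  rw [coeff_comp_X_pow, Finset.mul_sum]
  refine Finset.sum_eq_zero fun n _ => ?_
  split_ifs with hmn
  · rw [hmn, Nat.cast_mul, hQ, zero_mul, zero_mul]
  · exact mul_zero _

theorem coeff_pow_of_X_pow_dvd {f : PowerSeries R} {Q : ℕ} (hf : X ^ Q ∣ f) (j : ℕ) {m : ℕ}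
    (hm : m < Q * j) : coeff m (f ^ j) = 0 :=
  X_pow_dvd_iff.1 (by rw [pow_mul]; exact pow_dvd_pow_of_dvd hf j) m hm

theorem coeff_mul_pow_of_X_pow_dvd {f : PowerSeries R} {Q : ℕ} (hf : X ^ Q ∣ f) (k : ℕ) :
    coeff (Q * k) (f ^ k) = coeff Q f ^ k := by
  obtain ⟨w, rfl⟩ := hf
  rw [mul_pow, ← pow_mul, coeff_X_pow_mul', if_pos le_rfl, Nat.sub_self, coeff_X_pow_mul',
    if_pos le_rfl, Nat.sub_self, coeff_zero_eq_constantCoeff_apply,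
    coeff_zero_eq_constantCoeff_apply, map_pow]

def coeffIdeal (J : Ideal R) : Ideal (PowerSeries R) :=
  RingHom.ker (map (Ideal.Quotient.mk J))

theorem mem_coeffIdeal {J : Ideal R} {f : PowerSeries R} :
    f ∈ coeffIdeal J ↔ ∀ k, coeff k f ∈ J := by
  simp only [coeffIdeal, RingHom.mem_ker, PowerSeries.ext_iff, coeff_map, map_zero,
    Ideal.Quotient.eq_zero_iff_mem]

theorem C_mem_coeffIdeal {J : Ideal R} {a : R} : C a ∈ coeffIdeal J ↔ a ∈ J := by
  simp only [coeffIdeal, RingHom.mem_ker, map_C, _root_.map_eq_zero_iff _ C_injective,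
    Ideal.Quotient.eq_zero_iff_mem]

theorem coeffIdeal_mono {I J : Ideal R} (h : I ≤ J) : coeffIdeal I ≤ coeffIdeal J :=
  fun _ hf => mem_coeffIdeal.2 fun k => h (mem_coeffIdeal.1 hf k)

theorem mul_mem_coeffIdeal_mul {I J : Ideal R} {f g : PowerSeries R} (hf : f ∈ coeffIdeal I)
    (hg : g ∈ coeffIdeal J) : f * g ∈ coeffIdeal (I * J) :=
  mem_coeffIdeal.2 fun k => by
    rw [coeff_mul]
    exact Ideal.sum_mem _ fun p _ =>
      Ideal.mul_mem_mul (mem_coeffIdeal.1 hf p.1) (mem_coeffIdeal.1 hg p.2)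

theorem eq_zero_of_forall_mem_coeffIdeal_pow {J : Ideal R} [IsHausdorff J R]
    {f : PowerSeries R} (hf : ∀ n, f ∈ coeffIdeal (J ^ n)) : f = 0 := by
  ext k
  refine IsHausdorff.haus ‹_› _ fun n => ?_
  rw [SModEq.zero, smul_eq_mul, Ideal.mul_top]
  exact mem_coeffIdeal.1 (hf n) k

theorem sub_X_mem_coeffIdeal {J : Ideal R} {f : PowerSeries R}
    (hf : ∀ n, n ≠ 1 → coeff n f ∈ J) (hf₁ : coeff 1 f - 1 ∈ J) : f - X ∈ coeffIdeal J := by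
  refine mem_coeffIdeal.2 fun n => ?_
  rcases eq_or_ne n 1 with rfl | hn
  · rwa [map_sub, coeff_one_X]
  · rw [map_sub, coeff_X, if_neg hn, sub_zero]
    exact hf n hn

theorem comp_sub_comp_mem_coeffIdeal {J : Ideal R} {n : ℕ} (hn : 0 < n)
    {v b b' : PowerSeries R}
    (hv : ∀ k : ℕ, (k : R) * coeff k v ∈ J) (hb : b' - b ∈ coeffIdeal (J ^ n)) :
    comp v b' - comp v b ∈ coeffIdeal (J ^ (n + 1)) := by
  set ε := b' - b
  -- Taylor expansion to first order: b'^j - b^j ≡ j b^(j-1) ε modulo ε²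
  have hterm : ∀ j, C (coeff j v) * (b' ^ j - b ^ j) ∈ coeffIdeal (J ^ (n + 1)) := by
    intro j
    obtain ⟨c, hc⟩ := sq_dvd_add_pow_sub_sub ε b j
    have hexp : C (coeff j v) * (b' ^ j - b ^ j)
        = C ((j : R) * coeff j v) * b ^ (j - 1) * ε + C (coeff j v) * c * ε ^ 2 := by
      rw [map_mul, map_natCast, show b' = b + ε by ring]
      linear_combination C (coeff j v) * hc
    rw [hexp]
    refine add_mem ?_
      (Ideal.mul_mem_left _ _ (coeffIdeal_mono ?_ (sq ε ▸ mul_mem_coeffIdeal_mul hb hb)))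
    · rw [pow_succ']
      exact mul_mem_coeffIdeal_mul (Ideal.mul_mem_right _ _ (C_mem_coeffIdeal.2 (hv j))) hb
    · rw [← pow_add]
      exact Ideal.pow_le_pow_right (by omega)
  refine mem_coeffIdeal.2 fun m => ?_
  have hcoeff : coeff m (comp v b' - comp v b)
      = ∑ j ∈ Finset.range (m + 1), coeff m (C (coeff j v) * (b' ^ j - b ^ j)) := by
    simp only [map_sub, coeff_comp, coeff_C_mul, mul_sub, Finset.sum_sub_distrib]
  rw [hcoeff]
  exact Ideal.sum_mem _ fun j _ => mem_coeffIdeal.1 (hterm j) m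

theorem mem_coeffIdeal_pow_succ_of_comp_mem {J : Ideal R} {n Q : ℕ} (hQ : 0 < Q)
    {ε u : PowerSeries R} (hε₀ : constantCoeff ε = 0) (hε : ε ∈ coeffIdeal (J ^ n))
    (hu : X ^ Q ∣ map (Ideal.Quotient.mk J) u) (huQ : IsUnit (coeff Q u))
    (hεu : comp ε u ∈ coeffIdeal (J ^ (n + 1))) : ε ∈ coeffIdeal (J ^ (n + 1)) := by
  have hlow : ∀ j m, m < Q * j → coeff m (u ^ j) ∈ J := fun j m hm => by
    rw [← Ideal.Quotient.eq_zero_iff_mem, ← coeff_map, map_pow]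
    exact coeff_pow_of_X_pow_dvd hu j hm
  have hdiag : ∀ k, coeff (Q * k) (u ^ k) - coeff Q u ^ k ∈ J := fun k => by
    rw [← Ideal.Quotient.eq_zero_iff_mem, map_sub, map_pow (Ideal.Quotient.mk J), ← coeff_map,
      ← coeff_map, map_pow, coeff_mul_pow_of_X_pow_dvd hu, sub_self]
  refine mem_coeffIdeal.2 fun k => ?_
  induction k using Nat.strong_induction_on with
  | _ k ih =>
  rcases k.eq_zero_or_pos with rfl | hk
  · rw [coeff_zero_eq_constantCoeff_apply, hε₀]
    exact zero_mem _
  -- in the coefficient of X^(Qk) of ε(u), all terms but ε_k u_Q^k lie in J^(n+1)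
  have hsum := mem_coeffIdeal.1 hεu (Q * k)
  rw [coeff_comp, ← Finset.add_sum_erase _ _ (Finset.mem_range.2 (by nlinarith))] at hsum
  have hrest : ∑ j ∈ (Finset.range (Q * k + 1)).erase k, coeff j ε * coeff (Q * k) (u ^ j)
      ∈ J ^ (n + 1) := by
    refine Ideal.sum_mem _ fun j hj => ?_
    rcases lt_or_gt_of_ne (Finset.ne_of_mem_erase hj) with hjk | hjk
    · exact Ideal.mul_mem_right _ _ (ih j hjk)
    · rw [pow_succ]
      exact Ideal.mul_mem_mul (mem_coeffIdeal.1 hε j) (hlow j _ (by nlinarith))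
  have hcorr : coeff k ε * (coeff (Q * k) (u ^ k) - coeff Q u ^ k) ∈ J ^ (n + 1) := by
    rw [pow_succ]
    exact Ideal.mul_mem_mul (mem_coeffIdeal.1 hε k) (hdiag k)
  have hlead : coeff k ε * coeff Q u ^ k ∈ J ^ (n + 1) := by
    have := sub_mem ((add_mem_cancel_right hrest).1 hsum) hcorr
    rwa [← mul_sub, sub_sub_cancel] at this
  exact (Ideal.mul_unit_mem_iff_mem _ (huQ.pow k)).1 hlead

theorem eq_of_comp_eq_comp {J : Ideal R} [IsHausdorff J R] {Q : ℕ} (hQ : 0 < Q)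
    {u v β β' : PowerSeries R} (hu : X ^ Q ∣ map (Ideal.Quotient.mk J) u)
    (huQ : IsUnit (coeff Q u)) (hv : ∀ k : ℕ, (k : R) * coeff k v ∈ J)
    (hβ₀ : constantCoeff β = 0) (hβ'₀ : constantCoeff β' = 0) (hββ' : β' - β ∈ coeffIdeal J)
    (hβ : comp β u = comp v β) (hβ' : comp β' u = comp v β') : β = β' := by
  have hε₀ : constantCoeff (β' - β) = 0 := by rw [map_sub, hβ₀, hβ'₀, sub_zero]
  have hεu : comp (β' - β) u = comp v β' - comp v β := by rw [sub_comp, hβ, hβ']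
  have hε : ∀ n, β' - β ∈ coeffIdeal (J ^ (n + 1)) := by
    intro n
    induction n with
    | zero => rwa [zero_add, pow_one]
    | succ n ih =>
      exact mem_coeffIdeal_pow_succ_of_comp_mem hQ hε₀ ih hu huQ
        (hεu ▸ comp_sub_comp_mem_coeffIdeal n.succ_pos hv ih)
  refine (sub_eq_zero.1 (eq_zero_of_forall_mem_coeffIdeal_pow (J := J) fun n => ?_)).symm
  exact coeffIdeal_mono (Ideal.pow_le_pow_right n.le_succ) (hε n)

end FormalMod

theorem deformation_isomorphism_unique_general
    (O : Type) [CommRing O] [IsDomain O] [IsDiscreteValuationRing O]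
    (hkfin : Finite (IsLocalRing.ResidueField O))
    (ϖ : O)
    (Obr : Type) [CommRing Obr] [IsDomain Obr] [IsDiscreteValuationRing Obr]
    [Algebra O Obr] [IsLocalHom (algebraMap O Obr)]
    -- X̄: a formal O-module over k̆ of finite height h > 0
    (h : ℕ) (hh : 0 < h)
    (Xbar : FormalMod.FormalOModule O (IsLocalRing.ResidueField Obr)
      ((IsLocalRing.residue Obr).comp (algebraMap O Obr)))
    (hht : FormalMod.HasHeight Xbar ϖ (Nat.card (IsLocalRing.ResidueField O)) h)
    -- C ∈ CNL
    (C : Type) [CommRing C] [IsLocalRing C] (g : Obr →+* C) [IsLocalHom g]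
    (hcompl : IsAdicComplete (IsLocalRing.maximalIdeal C) C)
    -- X_C and X'_C: two deformations of X̄ to C
    (XC XC' : FormalMod.FormalOModule O C (g.comp (algebraMap O Obr)))
    (hXC : PowerSeries.map (PowerSeries.map (IsLocalRing.residue C)) XC.F
        = PowerSeries.map (PowerSeries.map (IsLocalRing.ResidueField.map g)) Xbar.F ∧
      ∀ c, PowerSeries.map (IsLocalRing.residue C) (XC.act c)
        = PowerSeries.map (IsLocalRing.ResidueField.map g) (Xbar.act c))
    (hXC' : PowerSeries.map (PowerSeries.map (IsLocalRing.residue C)) XC'.F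
        = PowerSeries.map (PowerSeries.map (IsLocalRing.ResidueField.map g)) Xbar.F ∧
      ∀ c, PowerSeries.map (IsLocalRing.residue C) (XC'.act c)
        = PowerSeries.map (IsLocalRing.ResidueField.map g) (Xbar.act c))
    -- β, β': two isomorphisms of formal O-modules X_C → X'_C over C reducing to
    -- the identity modulo m_C
    (β β' : PowerSeries C)
    (hβ : FormalMod.IsModuleHom XC XC' β ∧
      (∃ βi, FormalMod.IsModuleHom XC' XC βi ∧
        FormalMod.comp β βi = PowerSeries.X ∧ FormalMod.comp βi β = PowerSeries.X) ∧
      (∀ n, n ≠ 1 → PowerSeries.coeff (R := C) n β ∈ IsLocalRing.maximalIdeal C) ∧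
      PowerSeries.coeff (R := C) 1 β - 1 ∈ IsLocalRing.maximalIdeal C)
    (hβ' : FormalMod.IsModuleHom XC XC' β' ∧
      (∃ βi, FormalMod.IsModuleHom XC' XC βi ∧
        FormalMod.comp β' βi = PowerSeries.X ∧ FormalMod.comp βi β' = PowerSeries.X) ∧
      (∀ n, n ≠ 1 → PowerSeries.coeff (R := C) n β' ∈ IsLocalRing.maximalIdeal C) ∧
      PowerSeries.coeff (R := C) 1 β' - 1 ∈ IsLocalRing.maximalIdeal C) :
    -- then β = β'
    β = β' := by
  obtain ⟨⟨hβ₀, -, hβϖ⟩, -, hβm, hβ₁⟩ := hβ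
  obtain ⟨⟨hβ'₀, -, hβ'ϖ⟩, -, hβ'm, hβ'₁⟩ := hβ'
  obtain ⟨γ, hγ₀, hγ₁, hXbarϖ⟩ := hht
  set Q := Nat.card (IsLocalRing.ResidueField O) ^ h
  have hQ : 0 < Q := pow_pos Nat.card_pos h
  have hQC : (Q : IsLocalRing.ResidueField C) = 0 := by
    rw [Nat.cast_pow, natCast_card_eq_zero_of_ringHom ((IsLocalRing.ResidueField.map g).comp
      (IsLocalRing.ResidueField.map (algebraMap O Obr))), zero_pow hh.ne']
  set γ' := PowerSeries.map (IsLocalRing.ResidueField.map g) γ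
  have hu : PowerSeries.map (IsLocalRing.residue C) (XC.act ϖ)
      = FormalMod.comp γ' (PowerSeries.X ^ Q) := by
    rw [hXC.2, hXbarϖ, FormalMod.map_comp, map_pow, PowerSeries.map_X]
  have hv : PowerSeries.map (IsLocalRing.residue C) (XC'.act ϖ)
      = FormalMod.comp γ' (PowerSeries.X ^ Q) := by
    rw [hXC'.2, hXbarϖ, FormalMod.map_comp, map_pow, PowerSeries.map_X]
  have hγ'₀ : PowerSeries.constantCoeff γ' = 0 := by
    rw [← PowerSeries.coeff_zero_eq_constantCoeff_apply, PowerSeries.coeff_map,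
      PowerSeries.coeff_zero_eq_constantCoeff_apply, hγ₀, map_zero]
  refine FormalMod.eq_of_comp_eq_comp (J := IsLocalRing.maximalIdeal C) hQ ?_ ?_ ?_ hβ₀ hβ'₀ ?_
    (hβϖ ϖ) (hβ'ϖ ϖ)
  · exact hu ▸ FormalMod.X_pow_dvd_comp_X_pow hγ'₀ Q
  · rw [← IsLocalRing.residue_ne_zero_iff_isUnit, ← PowerSeries.coeff_map, hu,
      FormalMod.coeff_comp_X_pow_self _ hQ, PowerSeries.coeff_map]
    exact (map_ne_zero _).2 hγ₁
  · intro k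
    rw [← IsLocalRing.residue_eq_zero_iff, map_mul, map_natCast, ← PowerSeries.coeff_map, hv]
    exact FormalMod.natCast_mul_coeff_comp_X_pow _ hQC k
  · simpa using sub_mem (FormalMod.sub_X_mem_coeffIdeal hβ'm hβ'₁)
      (FormalMod.sub_X_mem_coeffIdeal hβm hβ₁)

theorem deformation_isomorphism_unique
    (O : Type) [CommRing O] [IsDomain O] [IsDiscreteValuationRing O]
    (hOcompl : IsAdicComplete (IsLocalRing.maximalIdeal O) O)
    (hkfin : Finite (IsLocalRing.ResidueField O))
    (ϖ : O) (hϖ : Irreducible ϖ)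
    (Obr : Type) [CommRing Obr] [IsDomain Obr] [IsDiscreteValuationRing Obr]
    [Algebra O Obr] [IsLocalHom (algebraMap O Obr)]
    (hObrcompl : IsAdicComplete (IsLocalRing.maximalIdeal Obr) Obr)
    (hunram : Irreducible (algebraMap O Obr ϖ))
    [IsAlgClosed (IsLocalRing.ResidueField Obr)]
    (halg : ∀ x : IsLocalRing.ResidueField Obr,
      ∃ g : Polynomial (IsLocalRing.ResidueField O), g.Monic ∧
        Polynomial.eval₂ (IsLocalRing.ResidueField.map (algebraMap O Obr)) x g = 0)
    -- X̄: a formal O-module over k̆ of finite height h > 0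
    (h : ℕ) (hh : 0 < h)
    (Xbar : FormalMod.FormalOModule O (IsLocalRing.ResidueField Obr)
      ((IsLocalRing.residue Obr).comp (algebraMap O Obr)))
    (hht : FormalMod.HasHeight Xbar ϖ (Nat.card (IsLocalRing.ResidueField O)) h)
    -- C ∈ CNL
    (C : Type) [CommRing C] [IsLocalRing C] (g : Obr →+* C) [IsLocalHom g]
    (hnoeth : IsNoetherianRing C)
    (hcompl : IsAdicComplete (IsLocalRing.maximalIdeal C) C)
    (hres : Function.Bijective (IsLocalRing.ResidueField.map g))
    -- X_C and X'_C: two deformations of X̄ to C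
    (XC XC' : FormalMod.FormalOModule O C (g.comp (algebraMap O Obr)))
    (hXC : PowerSeries.map (PowerSeries.map (IsLocalRing.residue C)) XC.F
        = PowerSeries.map (PowerSeries.map (IsLocalRing.ResidueField.map g)) Xbar.F ∧
      ∀ c, PowerSeries.map (IsLocalRing.residue C) (XC.act c)
        = PowerSeries.map (IsLocalRing.ResidueField.map g) (Xbar.act c))
    (hXC' : PowerSeries.map (PowerSeries.map (IsLocalRing.residue C)) XC'.F
        = PowerSeries.map (PowerSeries.map (IsLocalRing.ResidueField.map g)) Xbar.F ∧
      ∀ c, PowerSeries.map (IsLocalRing.residue C) (XC'.act c)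
        = PowerSeries.map (IsLocalRing.ResidueField.map g) (Xbar.act c))
    -- β, β': two isomorphisms of formal O-modules X_C → X'_C over C reducing to
    -- the identity modulo m_C
    (β β' : PowerSeries C)
    (hβ : FormalMod.IsModuleHom XC XC' β ∧
      (∃ βi, FormalMod.IsModuleHom XC' XC βi ∧
        FormalMod.comp β βi = PowerSeries.X ∧ FormalMod.comp βi β = PowerSeries.X) ∧
      (∀ n, n ≠ 1 → PowerSeries.coeff (R := C) n β ∈ IsLocalRing.maximalIdeal C) ∧
      PowerSeries.coeff (R := C) 1 β - 1 ∈ IsLocalRing.maximalIdeal C)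
    (hβ' : FormalMod.IsModuleHom XC XC' β' ∧
      (∃ βi, FormalMod.IsModuleHom XC' XC βi ∧
        FormalMod.comp β' βi = PowerSeries.X ∧ FormalMod.comp βi β' = PowerSeries.X) ∧
      (∀ n, n ≠ 1 → PowerSeries.coeff (R := C) n β' ∈ IsLocalRing.maximalIdeal C) ∧
      PowerSeries.coeff (R := C) 1 β' - 1 ∈ IsLocalRing.maximalIdeal C) :
    -- then β = β'
    β = β' :=
  deformation_isomorphism_unique_general O hkfin ϖ Obr h hh Xbar hht C g hcompl XC XC' hXC hXC' β β'
    hβ hβ'
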